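/- For every Pandora's Box instance with a finite scenario set, every run of Weitzman's rule with full updates (Algorithm 3), every partially-adaptive solution with total opening cost OPT_o = Σ_{s∈S} c^OPT(s) and total value cost OPT_v = Σ_{s∈S} v^OPT(s), and all parameters β, γ ∈ (0,1), the algorithm's total cost satisfies ALG ≤ OPT_o/(β·γ·(1−γ)) + OPT_v/((1−β)·γ). -/

import Mathlib

open scoped Classical

/-- Opening cost paid on scenario `s` by the partially-adaptive solution that opens the
boxes in the order `π` and stops on scenario `s` after opening box `π (t s)`. -/
noncomputable def optOpenCost {B S : Type*} [Fintype B] (c : B → ℝ)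
    (π : Fin (Fintype.card B) ≃ B) (t : S → Fin (Fintype.card B)) (s : S) : ℝ :=
  ∑ i ∈ Finset.Iic (t s), c (π i)

/-- Value selected on scenario `s` by the partially-adaptive solution `(π, t)`:
the minimum value among the opened boxes `π 0, …, π (t s)`. -/
noncomputable def optValue {B S : Type*} [Fintype B] (v : B → S → ℝ)
    (π : Fin (Fintype.card B) ≃ B) (t : S → Fin (Fintype.card B)) (s : S) : ℝ :=
  (Finset.Iic (t s)).inf' Finset.nonempty_Iic (fun i => v (π i) s)

/-- In the tree of states built by Algorithm 3 (full updates), `fullPath v bx A s k` is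
the set of scenarios still consistent with scenario `s` at depth `k`: the root state is
all scenarios, and the child containing `s` consists of the uncovered scenarios whose
value in the opened box `bx R` agrees with that of `s`. -/
noncomputable def fullPath {B S : Type*} [Fintype S] [DecidableEq S]
    (v : B → S → ℝ) (bx : Finset S → B) (A : Finset S → Finset S) (s : S) : ℕ → Finset S
  | 0 => Finset.univ
  | k + 1 =>
      (fullPath v bx A s k \ A (fullPath v bx A s k)).filter
        (fun s' => v (bx (fullPath v bx A s k)) s' = v (bx (fullPath v bx A s k)) s)

/-- The vector of (residual) opening costs at the state of depth `k` on scenario `s`'s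
root-to-leaf path: initially the original costs, and the cost of each opened box is set
to `0` in its children. -/
noncomputable def fullCostAt {B S : Type*} [Fintype S] [DecidableEq S] [DecidableEq B]
    (c : B → ℝ) (v : B → S → ℝ) (bx : Finset S → B) (A : Finset S → Finset S)
    (s : S) : ℕ → B → ℝ
  | 0 => c
  | k + 1 => Function.update (fullCostAt c v bx A s k) (bx (fullPath v bx A s k)) 0

/-!
The accounting identity of Weitzman-type analyses: spreading the cost charged at each state of
the tree evenly over the scenarios covered there, the algorithm's total cost is the sum, over
scenarios `s`, of the ratio `σ` at the state `R_s` where `s` is covered. At `R_s` take the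
quantiles `X_s` of OPT's opening costs (top `βγ` fraction of `R_s`) and `Y_s` of OPT's values
(top `(1-β)γ` fraction). More than a `1-γ` fraction of `R_s` then has opening cost `≤ X_s` and
value `≤ Y_s`; grouping these scenarios by the box in which OPT finds its value gives candidate
pairs for the minimization, whose boxes OPT opens for the scenario among them that stops last,
so `σ ≤ X_s/(1-γ) + Y_s`. Finally, the states form a laminar family, so for every level `t`
the maximal states with `X_s ≥ t` are disjoint, each holding a `βγ` fraction of scenarios with
OPT's opening cost `≥ t`; by the layer cake formula `βγ ∑ X_s ≤ OPT_o`, and likewise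
`(1-β)γ ∑ Y_s ≤ OPT_v`.
-/

open Finset

section LayerCake

open MeasureTheory

variable {S : Type*} [Fintype S]

theorem natCast_card_le_eq_sum_indicator (f : S → ℝ) (t : ℝ) :
    (#{u | t ≤ f u} : ℝ) = ∑ u, (Set.Iic (f u)).indicator 1 t := by
  rw [natCast_card_filter]
  simp only [Set.indicator_apply, Set.mem_Iic, Pi.one_apply]

theorem integrableOn_card_le (f : S → ℝ) (T : ℝ) :
    IntegrableOn (fun t => (#{u | t ≤ f u} : ℝ)) (Set.Ioc 0 T) := by
  simp_rw [natCast_card_le_eq_sum_indicator]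
  exact integrable_finsetSum _ fun u _ => (integrable_const 1).indicator measurableSet_Iic

theorem sum_eq_setIntegral_card_le {f : S → ℝ} (hf : ∀ u, 0 ≤ f u) {T : ℝ}
    (hT : ∀ u, f u ≤ T) :
    ∑ u, f u = ∫ t in Set.Ioc 0 T, (#{u | t ≤ f u} : ℝ) := by
  simp_rw [natCast_card_le_eq_sum_indicator]
  rw [integral_finsetSum _ fun u _ => (integrable_const 1).indicator measurableSet_Iic]
  refine sum_congr rfl fun u _ => ?_
  rw [integral_indicator_one measurableSet_Iic, measureReal_restrict_apply measurableSet_Iic,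
    Set.Iic_inter_Ioc_of_le (hT u), Real.volume_real_Ioc_of_le (hf u), sub_zero]

theorem mul_sum_le_sum_of_mul_card_le {f g : S → ℝ} (hf : ∀ u, 0 ≤ f u) (hg : ∀ u, 0 ≤ g u)
    {m : ℝ} (hfg : ∀ t, 0 < t → m * #{u | t ≤ f u} ≤ #{u | t ≤ g u}) :
    m * ∑ u, f u ≤ ∑ u, g u := by
  set T := ∑ u, (f u + g u)
  have hT : ∀ u, f u + g u ≤ T := fun u =>
    single_le_sum (fun w _ => add_nonneg (hf w) (hg w)) (mem_univ u)
  rw [sum_eq_setIntegral_card_le hf (fun u => by linarith [hT u, hg u]),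
    sum_eq_setIntegral_card_le hg (fun u => by linarith [hT u, hf u]), ← integral_const_mul]
  exact setIntegral_mono_on ((integrableOn_card_le f T).const_mul m) (integrableOn_card_le g T)
    measurableSet_Ioc fun t ht => hfg t ht.1

end LayerCake

theorem mul_card_le_of_laminar {α : Type*} [DecidableEq α] {m : ℝ} (hm : 0 ≤ m)
    (M : α → Finset α) (D H : Finset α) (hmem : ∀ x ∈ D, x ∈ M x)
    (hlam : ∀ x ∈ D, ∀ y ∈ D, M x ⊆ M y ∨ M y ⊆ M x ∨ Disjoint (M x) (M y))
    (hdense : ∀ x ∈ D, m * #(M x) ≤ #(M x ∩ H)) :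
    m * #D ≤ #H := by
  induction D using Finset.strongInduction generalizing H with
  | H D ih =>
    obtain rfl | hD := D.eq_empty_or_nonempty
    · simp
    obtain ⟨x, hx, hmax⟩ := D.exists_max_image (fun y => #(M y)) hD
    set D' := {y ∈ D | ¬ M y ⊆ M x}
    -- A largest set `M x` contains or is disjoint from each of the others.
    have hdisj : ∀ y ∈ D', Disjoint (M x) (M y) := by
      intro y hy
      rw [mem_filter] at hy
      obtain h | h | h := hlam x hx y hy.1
      · exact absurd (eq_of_subset_of_card_le h (hmax y hy.1)).ge hy.2
      · exact absurd h hy.2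
      · exact h
    have hD' : D' ⊂ D := ssubset_of_subset_of_ne (filter_subset _ _) fun h =>
      (mem_filter.mp (h ▸ hx : x ∈ D')).2 subset_rfl
    have hrest : m * #D' ≤ #(H \ M x) := by
      refine ih D' hD' (H \ M x) (fun y hy => hmem y (mem_filter.mp hy).1)
        (fun y hy z hz => hlam y (mem_filter.mp hy).1 z (mem_filter.mp hz).1) fun y hy => ?_
      rw [← inter_sdiff_assoc,
        sdiff_eq_self_of_disjoint ((hdisj y hy).symm.mono_left inter_subset_left)]
      exact hdense y (mem_filter.mp hy).1
    have hcover : D ⊆ M x ∪ D' := fun y hy => by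
      by_cases h : M y ⊆ M x
      · exact mem_union_left _ (h (hmem y hy))
      · exact mem_union_right _ (mem_filter.mpr ⟨hy, h⟩)
    have hsplit : #(M x ∩ H) + #(H \ M x) = #H := by
      rw [inter_comm]
      exact card_inter_add_card_sdiff H (M x)
    calc m * #D ≤ m * (#(M x) + #D') := by
          gcongr
          exact_mod_cast (card_le_card hcover).trans (card_union_le _ _)
      _ ≤ #(M x ∩ H) + #(H \ M x) := by
          rw [mul_add]
          exact add_le_add (hdense x hx) hrest
      _ = #H := by exact_mod_cast hsplit

theorem exists_quantile {S : Type*} {R : Finset S} (hR : R.Nonempty) (g : S → ℝ) {m : ℝ}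
    (hm0 : 0 < m) (hm1 : m ≤ 1) :
    ∃ u ∈ R, m * #R ≤ #{w ∈ R | g u ≤ g w} ∧ (#{w ∈ R | g u < g w} : ℝ) < m * #R := by
  set C := {u ∈ R | m * #R ≤ #{w ∈ R | g u ≤ g w}}
  have hC : C.Nonempty := by
    obtain ⟨u, hu, hmin⟩ := R.exists_min_image g hR
    refine ⟨u, mem_filter.mpr ⟨hu, ?_⟩⟩
    rw [filter_true_of_mem hmin]
    exact mul_le_of_le_one_left (Nat.cast_nonneg _) hm1
  obtain ⟨u, hu, hmax⟩ := C.exists_max_image g hC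
  obtain ⟨huR, hu_dense⟩ := mem_filter.mp hu
  refine ⟨u, huR, hu_dense, not_le.mp fun h_above => ?_⟩
  have hpos : {w ∈ R | g u < g w}.Nonempty := by
    rw [← card_pos, ← Nat.cast_pos (α := ℝ)]
    exact (mul_pos hm0 (Nat.cast_pos.mpr (card_pos.mpr hR))).trans_le h_above
  obtain ⟨u', hu', hmin⟩ := exists_min_image _ g hpos
  obtain ⟨hu'R, hlt⟩ := mem_filter.mp hu'
  have : u' ∈ C := by
    refine mem_filter.mpr ⟨hu'R, h_above.trans ?_⟩
    exact_mod_cast card_le_card fun w hw => mem_filter.mpr ⟨(mem_filter.mp hw).1, hmin w hw⟩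
  exact (hmax u' this).not_gt hlt

theorem card_le_card_filter_and_add {S : Type*} (R : Finset S) (f g : S → ℝ) (X Y : ℝ) :
    #R ≤ #{u ∈ R | f u ≤ X ∧ g u ≤ Y} + #{u ∈ R | X < f u} + #{u ∈ R | Y < g u} := by
  refine (card_le_card fun u hu => ?_).trans
    ((card_union_le _ _).trans (Nat.add_le_add_right (card_union_le _ _) _))
  simp only [mem_union, mem_filter]
  by_cases hf : f u ≤ X <;> by_cases hg : g u ≤ Y <;> simp_all

section PartiallyAdaptive

variable {B S : Type*} [Fintype B]

theorem optOpenCost_nonneg {c : B → ℝ} (hc : ∀ b, 0 ≤ c b) (π : Fin (Fintype.card B) ≃ B)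
    (τ : S → Fin (Fintype.card B)) (s : S) : 0 ≤ optOpenCost c π τ s :=
  sum_nonneg fun _ _ => hc _

theorem exists_le_and_eq_optValue (v : B → S → ℝ) (π : Fin (Fintype.card B) ≃ B)
    (τ : S → Fin (Fintype.card B)) (s : S) :
    ∃ i ≤ τ s, v (π i) s = optValue v π τ s := by
  obtain ⟨i, hi, h⟩ := exists_mem_eq_inf' nonempty_Iic (fun i => v (π i) s)
  exact ⟨i, mem_Iic.mp hi, h.symm⟩

theorem optValue_nonneg {v : B → S → ℝ} (hv : ∀ b s, 0 ≤ v b s) (π : Fin (Fintype.card B) ≃ B)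
    (τ : S → Fin (Fintype.card B)) (s : S) : 0 ≤ optValue v π τ s := by
  obtain ⟨i, -, h⟩ := exists_le_and_eq_optValue v π τ s
  exact h ▸ hv _ _

/-- The ratio `σ` minimized by Weitzman's rule at a state `R`. -/
noncomputable def coverRatio (c : B → ℝ) (v : B → S → ℝ) (R : Finset S) (b : B)
    (A' : Finset S) : ℝ :=
  (c b * #R + ∑ x ∈ A', v b x) / #A'

theorem mul_card_le_of_forall_mul_card_le {c : B → ℝ} (hc : ∀ b, 0 ≤ c b) (v : B → S → ℝ)
    (π : Fin (Fintype.card B) ≃ B) (τ : S → Fin (Fintype.card B)) {R G : Finset S}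
    (hGR : G ⊆ R) (hG : G.Nonempty) {p X Y : ℝ}
    (hmin : ∀ b A', A' ⊆ R → A'.Nonempty → p * #A' ≤ c b * #R + ∑ x ∈ A', v b x)
    (hX : ∀ u ∈ G, optOpenCost c π τ u ≤ X) (hY : ∀ u ∈ G, optValue v π τ u ≤ Y) :
    p * #G ≤ X * #R + Y * #G := by
  choose idx hidx_le hidx_eq using exists_le_and_eq_optValue v π τ
  set I := G.image idx
  have hgroup : ∀ i ∈ I,
      p * #{u ∈ G | idx u = i} ≤ c (π i) * #R + Y * #{u ∈ G | idx u = i} := by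
    intro i hi
    obtain ⟨u, hu, rfl⟩ := mem_image.mp hi
    calc p * #{w ∈ G | idx w = idx u}
        ≤ c (π (idx u)) * #R + ∑ w ∈ G with idx w = idx u, v (π (idx u)) w :=
          hmin _ _ ((filter_subset _ _).trans hGR) ⟨u, mem_filter.mpr ⟨hu, rfl⟩⟩
      _ ≤ c (π (idx u)) * #R + Y * #{w ∈ G | idx w = idx u} := by
          rw [mul_comm Y, ← nsmul_eq_mul, ← sum_const]
          gcongr with w hw
          obtain ⟨hwG, hw⟩ := mem_filter.mp hw
          rw [← hw, hidx_eq]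
          exact hY w hwG
  -- OPT opens every box of `I` on the scenario of `G` on which it stops last.
  have hopen : ∑ i ∈ I, c (π i) ≤ X := by
    obtain ⟨u, hu, hmax⟩ := G.exists_max_image τ hG
    refine le_trans ?_ (hX u hu)
    refine sum_le_sum_of_subset_of_nonneg (fun i hi => ?_) fun i _ _ => hc _
    obtain ⟨w, hw, rfl⟩ := mem_image.mp hi
    exact mem_Iic.mpr ((hidx_le w).trans (hmax w hw))
  have hcard : (#G : ℝ) = ∑ i ∈ I, (#{u ∈ G | idx u = i} : ℝ) := by
    exact_mod_cast card_eq_sum_card_image idx G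
  calc p * #G = ∑ i ∈ I, p * #{u ∈ G | idx u = i} := by rw [hcard, mul_sum]
    _ ≤ ∑ i ∈ I, (c (π i) * #R + Y * #{u ∈ G | idx u = i}) := sum_le_sum hgroup
    _ = (∑ i ∈ I, c (π i)) * #R + Y * #G := by
        rw [sum_add_distrib, ← sum_mul, ← mul_sum, hcard]
    _ ≤ X * #R + Y * #G := by gcongr

theorem le_div_add_of_card_filter_lt {c c' : B → ℝ} (hc : ∀ b, 0 ≤ c b)
    (hc' : ∀ b, c' b ≤ c b) (v : B → S → ℝ) (π : Fin (Fintype.card B) ≃ B)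
    (τ : S → Fin (Fintype.card B)) {R : Finset S} {p X Y γ : ℝ} (hX : 0 ≤ X) (hγ : γ < 1)
    (hmin : ∀ b A', A' ⊆ R → A'.Nonempty → p ≤ coverRatio c' v R b A')
    (hbad : (#{u ∈ R | X < optOpenCost c π τ u} + #{u ∈ R | Y < optValue v π τ u} : ℝ) <
      γ * #R) :
    p ≤ X / (1 - γ) + Y := by
  set G := {u ∈ R | optOpenCost c π τ u ≤ X ∧ optValue v π τ u ≤ Y}
  have hG : (1 - γ) * #R < #G := by
    have : (#R : ℝ) ≤ #G + #{u ∈ R | X < optOpenCost c π τ u} +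
        #{u ∈ R | Y < optValue v π τ u} := by
      exact_mod_cast card_le_card_filter_and_add R (optOpenCost c π τ) (optValue v π τ) X Y
    linarith
  have hGpos : (0 : ℝ) < #G :=
    lt_of_le_of_lt (mul_nonneg (by linarith) (Nat.cast_nonneg _)) hG
  have hmin' : ∀ b A', A' ⊆ R → A'.Nonempty → p * #A' ≤ c b * #R + ∑ x ∈ A', v b x := by
    intro b A' hA' hne
    calc p * #A' ≤ c' b * #R + ∑ x ∈ A', v b x :=
          (le_div_iff₀ (Nat.cast_pos.mpr hne.card_pos)).mp (hmin b A' hA' hne)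
      _ ≤ c b * #R + ∑ x ∈ A', v b x := by gcongr; exact hc' b
  have hpG := mul_card_le_of_forall_mul_card_le hc v π τ (filter_subset _ R)
    (card_pos.mp (Nat.cast_pos.mp hGpos)) hmin' (fun u hu => (mem_filter.mp hu).2.1)
    (fun u hu => (mem_filter.mp hu).2.2)
  have hXR : X * #R ≤ X / (1 - γ) * #G := by
    rw [div_mul_eq_mul_div, le_div_iff₀ (by linarith), mul_assoc]
    exact mul_le_mul_of_nonneg_left (by linarith) hX
  exact le_of_mul_le_mul_right (by linarith) hGpos

end PartiallyAdaptive

section Tree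

variable {B S : Type*} [Fintype S] [DecidableEq S] {v : B → S → ℝ} {bx : Finset S → B}
  {A : Finset S → Finset S}

theorem fullPath_antitone (s : S) : Antitone (fullPath v bx A s) :=
  antitone_nat_of_succ_le fun _ _ hu => (mem_sdiff.mp (mem_filter.mp hu).1).1

theorem fullPath_eq_of_mem {s u : S} {k : ℕ} (hu : u ∈ fullPath v bx A s k) :
    fullPath v bx A u k = fullPath v bx A s k := by
  induction k with
  | zero => rfl
  | succ k ih =>
    have hk := ih (fullPath_antitone s k.le_succ hu)
    rw [fullPath] at hu
    rw [fullPath, fullPath, hk, (mem_filter.mp hu).2]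

theorem fullCostAt_eq_of_mem [DecidableEq B] (c : B → ℝ) {s u : S} {k : ℕ}
    (hu : u ∈ fullPath v bx A s k) : fullCostAt c v bx A u k = fullCostAt c v bx A s k := by
  induction k with
  | zero => rfl
  | succ k ih =>
    have hk := fullPath_antitone s k.le_succ hu
    rw [fullCostAt, fullCostAt, ih hk, fullPath_eq_of_mem hk]

theorem fullCostAt_le [DecidableEq B] {c : B → ℝ} (hc : ∀ b, 0 ≤ c b) (s : S) (k : ℕ) (b : B) :
    fullCostAt c v bx A s k b ≤ c b := by
  induction k with
  | zero => exact le_rfl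
  | succ k ih =>
    rw [fullCostAt, Function.update_apply]
    split_ifs
    exacts [hc b, ih]

theorem fullPath_laminar (s u : S) (j k : ℕ) :
    fullPath v bx A s j ⊆ fullPath v bx A u k ∨ fullPath v bx A u k ⊆ fullPath v bx A s j ∨
      Disjoint (fullPath v bx A s j) (fullPath v bx A u k) := by
  by_cases hd : Disjoint (fullPath v bx A s j) (fullPath v bx A u k)
  · exact Or.inr (Or.inr hd)
  obtain ⟨w, hws, hwu⟩ := not_disjoint_iff.mp hd
  rw [← fullPath_eq_of_mem hws, ← fullPath_eq_of_mem hwu]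
  rcases le_total j k with hjk | hkj
  · exact Or.inr (Or.inl (fullPath_antitone w hjk))
  · exact Or.inl (fullPath_antitone w hkj)

variable {d : S → ℕ}

theorem mem_fullPath_self (hnotcov : ∀ s, ∀ k < d s, s ∉ A (fullPath v bx A s k)) (s : S)
    {k : ℕ} (hk : k ≤ d s) : s ∈ fullPath v bx A s k := by
  induction k with
  | zero => exact mem_univ s
  | succ k ih =>
    rw [fullPath]
    exact mem_filter.mpr ⟨mem_sdiff.mpr ⟨ih (by omega), hnotcov s k (by omega)⟩, rfl⟩

theorem le_of_mem_fullPath (hcov : ∀ s, s ∈ A (fullPath v bx A s (d s))) {s : S} {k : ℕ}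
    (hs : s ∈ fullPath v bx A s k) : k ≤ d s := by
  by_contra! h
  have hs' := fullPath_antitone s h hs
  rw [fullPath] at hs'
  exact (mem_sdiff.mp (mem_filter.mp hs').1).2 (hcov s)

structure IsCoverDepth (v : B → S → ℝ) (bx : Finset S → B) (A : Finset S → Finset S)
    (d : S → ℕ) : Prop where
  subset : ∀ s, ∀ k ≤ d s, A (fullPath v bx A s k) ⊆ fullPath v bx A s k
  not_mem : ∀ s, ∀ k < d s, s ∉ A (fullPath v bx A s k)
  mem : ∀ s, s ∈ A (fullPath v bx A s (d s))

namespace IsCoverDepth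

theorem mem_A_fullPath_iff (hd : IsCoverDepth v bx A d) {s u : S} {k : ℕ} (hk : k ≤ d s) :
    u ∈ A (fullPath v bx A s k) ↔ k = d u ∧ s ∈ fullPath v bx A u (d u) := by
  constructor
  · intro hu
    have hP := fullPath_eq_of_mem (hd.subset s k hk hu)
    have hkd : k = d u := by
      refine le_antisymm (le_of_mem_fullPath hd.mem ?_) (not_lt.mp fun h => hd.not_mem u k h ?_)
      · exact hP ▸ hd.subset s k hk hu
      · exact hP ▸ hu
    subst hkd
    exact ⟨rfl, hP ▸ mem_fullPath_self hd.not_mem s hk⟩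
  · rintro ⟨rfl, hs⟩
    exact fullPath_eq_of_mem hs ▸ hd.mem u

theorem fullPath_eq_of_mem_A (hd : IsCoverDepth v bx A d) {s u : S}
    (hu : u ∈ A (fullPath v bx A s (d s))) :
    fullPath v bx A u (d u) = fullPath v bx A s (d s) := by
  obtain ⟨hdu, hs⟩ := (hd.mem_A_fullPath_iff le_rfl).mp hu
  rw [← hdu] at hs ⊢
  exact (fullPath_eq_of_mem hs).symm

theorem mem_A_comm (hd : IsCoverDepth v bx A d) {s u : S} :
    u ∈ A (fullPath v bx A s (d s)) ↔ s ∈ A (fullPath v bx A u (d u)) :=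
  ⟨fun h => hd.fullPath_eq_of_mem_A h ▸ hd.mem s, fun h => hd.fullPath_eq_of_mem_A h ▸ hd.mem u⟩

-- The state where `u` is covered lies on the path of `s` exactly when `s ∈ R_u`.
theorem sum_range_ite_mem_A (hd : IsCoverDepth v bx A d) (w : ℝ) (s u : S) :
    ∑ k ∈ range (d s + 1), (if u ∈ A (fullPath v bx A s k) then w else 0) =
      if s ∈ fullPath v bx A u (d u) then w else 0 := by
  rw [sum_congr rfl fun k hk =>
    if_congr (hd.mem_A_fullPath_iff (Nat.lt_succ_iff.mp (mem_range.mp hk))) rfl rfl]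
  by_cases hs : s ∈ fullPath v bx A u (d u)
  · have hdu : d u ≤ d s := le_of_mem_fullPath hd.mem (fullPath_eq_of_mem hs ▸ hs)
    simp [hs, Nat.lt_succ_of_le hdu]
  · simp [hs]

theorem sum_sum_range_sum_A (hd : IsCoverDepth v bx A d) (w : S → ℝ) :
    ∑ s, ∑ k ∈ range (d s + 1), ∑ u ∈ A (fullPath v bx A s k), w u =
      ∑ u, #(fullPath v bx A u (d u)) * w u := by
  have hA : ∀ s k, ∑ u ∈ A (fullPath v bx A s k), w u =
      ∑ u, if u ∈ A (fullPath v bx A s k) then w u else 0 := fun s k => by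
    rw [sum_ite_mem, univ_inter]
  simp_rw [hA]
  rw [sum_congr rfl fun s _ => sum_comm]
  simp_rw [hd.sum_range_ite_mem_A]
  rw [sum_comm]
  simp [sum_ite_mem, univ_inter]

theorem sum_sum_A (hd : IsCoverDepth v bx A d) (w : S → ℝ) :
    ∑ s, ∑ u ∈ A (fullPath v bx A s (d s)), w u = ∑ u, #(A (fullPath v bx A u (d u))) * w u := by
  have hA : ∀ s, ∑ u ∈ A (fullPath v bx A s (d s)), w u =
      ∑ u, if s ∈ A (fullPath v bx A u (d u)) then w u else 0 := fun s => by
    simp_rw [← hd.mem_A_comm]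
    rw [sum_ite_mem, univ_inter]
  simp_rw [hA]
  rw [sum_comm]
  simp [sum_ite_mem, univ_inter]

theorem sum_sum_range_fullCostAt [DecidableEq B] (hd : IsCoverDepth v bx A d)
    (hA : ∀ s, ∀ k ≤ d s, (A (fullPath v bx A s k)).Nonempty) (c : B → ℝ) :
    ∑ s, ∑ k ∈ range (d s + 1), fullCostAt c v bx A s k (bx (fullPath v bx A s k)) =
      ∑ u, #(fullPath v bx A u (d u)) * (fullCostAt c v bx A u (d u)
        (bx (fullPath v bx A u (d u))) / #(A (fullPath v bx A u (d u)))) := by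
  rw [← hd.sum_sum_range_sum_A]
  refine sum_congr rfl fun s _ => sum_congr rfl fun k hk => ?_
  have hks : k ≤ d s := Nat.lt_succ_iff.mp (mem_range.mp hk)
  have hterm : ∀ u ∈ A (fullPath v bx A s k), fullCostAt c v bx A u (d u)
      (bx (fullPath v bx A u (d u))) / #(A (fullPath v bx A u (d u))) =
      fullCostAt c v bx A s k (bx (fullPath v bx A s k)) / #(A (fullPath v bx A s k)) := by
    intro u hu
    obtain ⟨rfl, hsu⟩ := (hd.mem_A_fullPath_iff hks).mp hu
    rw [fullCostAt_eq_of_mem c hsu, fullPath_eq_of_mem hsu]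
  rw [sum_congr rfl hterm, sum_const, nsmul_eq_mul, mul_div_cancel₀]
  exact Nat.cast_ne_zero.mpr (hA s k hks).card_pos.ne'

theorem sum_value_eq_sum_div (hd : IsCoverDepth v bx A d) :
    ∑ s, v (bx (fullPath v bx A s (d s))) s =
      ∑ s, (∑ x ∈ A (fullPath v bx A s (d s)), v (bx (fullPath v bx A s (d s))) x) /
        #(A (fullPath v bx A s (d s))) := by
  have hterm : ∀ s, (∑ x ∈ A (fullPath v bx A s (d s)), v (bx (fullPath v bx A s (d s))) x) /
      #(A (fullPath v bx A s (d s))) = ∑ x ∈ A (fullPath v bx A s (d s)),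
        v (bx (fullPath v bx A x (d x))) x / #(A (fullPath v bx A x (d x))) := fun s => by
    rw [sum_div]
    exact sum_congr rfl fun x hx => by rw [hd.fullPath_eq_of_mem_A hx]
  simp_rw [hterm, hd.sum_sum_A]
  refine sum_congr rfl fun s _ => (mul_div_cancel₀ _ ?_).symm
  exact Nat.cast_ne_zero.mpr (card_ne_zero_of_mem (hd.mem s))

theorem sum_cost_eq_sum_coverRatio [DecidableEq B] (hd : IsCoverDepth v bx A d)
    (hA : ∀ s, ∀ k ≤ d s, (A (fullPath v bx A s k)).Nonempty) (c : B → ℝ) :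
    ∑ s, ((∑ k ∈ range (d s + 1), fullCostAt c v bx A s k (bx (fullPath v bx A s k))) +
        v (bx (fullPath v bx A s (d s))) s) =
      ∑ s, coverRatio (fullCostAt c v bx A s (d s)) v (fullPath v bx A s (d s))
        (bx (fullPath v bx A s (d s))) (A (fullPath v bx A s (d s))) := by
  rw [sum_add_distrib, hd.sum_sum_range_fullCostAt hA, hd.sum_value_eq_sum_div,
    ← sum_add_distrib]
  refine sum_congr rfl fun s _ => ?_
  rw [coverRatio]
  ring

end IsCoverDepth

theorem mul_sum_le_sum_of_dense (hnotcov : ∀ s, ∀ k < d s, s ∉ A (fullPath v bx A s k))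
    {g : S → ℝ} (hg : ∀ u, 0 ≤ g u) {m : ℝ} (hm : 0 ≤ m) {X : S → ℝ} (hX : ∀ s, 0 ≤ X s)
    (hdense : ∀ s, m * #(fullPath v bx A s (d s)) ≤ #{u ∈ fullPath v bx A s (d s) | X s ≤ g u}) :
    m * ∑ s, X s ≤ ∑ u, g u := by
  refine mul_sum_le_sum_of_mul_card_le hX hg fun t _ => ?_
  refine mul_card_le_of_laminar hm (fun s => fullPath v bx A s (d s)) _ _
    (fun s _ => mem_fullPath_self hnotcov s le_rfl) (fun s _ u _ => fullPath_laminar s u _ _)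
    fun s hs => (hdense s).trans ?_
  refine Nat.cast_le.mpr (card_le_card fun u hu => ?_)
  obtain ⟨huR, hXg⟩ := mem_filter.mp hu
  exact mem_inter.mpr ⟨huR, mem_filter.mpr ⟨mem_univ u, (mem_filter.mp hs).2.trans hXg⟩⟩

end Tree

theorem weitzman_full_updates_histogram_bound_general
    {B S : Type*} [Fintype B] [Fintype S]
    [DecidableEq B] [DecidableEq S]
    (c : B → ℝ) (hc : ∀ b, 0 ≤ c b)
    (v : B → S → ℝ) (hv : ∀ b s, 0 ≤ v b s)
    -- a run of Algorithm 3: the chosen box `bx R` and covered set `A R` at each state,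
    -- and the depth `d s` at which each scenario `s` is covered
    (bx : Finset S → B) (A : Finset S → Finset S) (d : S → ℕ)
    (hAsub : ∀ s : S, ∀ k ≤ d s, A (fullPath v bx A s k) ⊆ fullPath v bx A s k)
    (hAne : ∀ s : S, ∀ k ≤ d s, (A (fullPath v bx A s k)).Nonempty)
    -- `(bx R, A R)` minimizes the ratio over all boxes and nonempty subsets of `R`:
    (hmin : ∀ s : S, ∀ k ≤ d s, ∀ b' : B, ∀ A' : Finset S,
      A' ⊆ fullPath v bx A s k → A'.Nonempty →
      (fullCostAt c v bx A s k (bx (fullPath v bx A s k)) * (fullPath v bx A s k).card +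
          ∑ x ∈ A (fullPath v bx A s k), v (bx (fullPath v bx A s k)) x) /
        (A (fullPath v bx A s k)).card ≤
      (fullCostAt c v bx A s k b' * (fullPath v bx A s k).card + ∑ x ∈ A', v b' x) /
        A'.card)
    -- scenario `s` survives until depth `d s`, where it is covered:
    (hnotcov : ∀ s : S, ∀ k < d s, s ∉ A (fullPath v bx A s k))
    (hcov : ∀ s : S, s ∈ A (fullPath v bx A s (d s)))
    -- any partially-adaptive solution:
    (π : Fin (Fintype.card B) ≃ B) (τ : S → Fin (Fintype.card B))
    -- parameters of the analysis:
    (β γ : ℝ) (hβ0 : 0 < β) (hβ1 : β < 1) (hγ0 : 0 < γ) (hγ1 : γ < 1) :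
    ∑ s, ((∑ k ∈ Finset.range (d s + 1),
          fullCostAt c v bx A s k (bx (fullPath v bx A s k))) +
        v (bx (fullPath v bx A s (d s))) s) ≤
      (∑ s, optOpenCost c π τ s) / (β * γ * (1 - γ)) +
        (∑ s, optValue v π τ s) / ((1 - β) * γ) := by
  have hd : IsCoverDepth v bx A d := ⟨hAsub, hnotcov, hcov⟩
  have hR : ∀ s, (fullPath v bx A s (d s)).Nonempty :=
    fun s => ⟨s, mem_fullPath_self hnotcov s le_rfl⟩
  have hopen : 0 < β * γ := by positivity
  have hvalue : 0 < (1 - β) * γ := mul_pos (by linarith) hγ0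
  choose x _ hXdense hXtop using fun s =>
    exists_quantile (hR s) (optOpenCost c π τ) hopen (by nlinarith)
  choose y _ hYdense hYtop using fun s =>
    exists_quantile (hR s) (optValue v π τ) hvalue (by nlinarith)
  have hXsum := mul_sum_le_sum_of_dense hnotcov (optOpenCost_nonneg hc π τ) hopen.le
    (fun s => optOpenCost_nonneg hc π τ (x s)) hXdense
  have hYsum := mul_sum_le_sum_of_dense hnotcov (optValue_nonneg hv π τ) hvalue.le
    (fun s => optValue_nonneg hv π τ (y s)) hYdense
  rw [hd.sum_cost_eq_sum_coverRatio hAne c]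
  calc _ ≤ ∑ s, (optOpenCost c π τ (x s) / (1 - γ) + optValue v π τ (y s)) :=
        sum_le_sum fun s _ => le_div_add_of_card_filter_lt hc (fullCostAt_le hc s (d s)) v π τ
          (optOpenCost_nonneg hc π τ _) hγ1 (hmin s (d s) le_rfl) (by linarith [hXtop s, hYtop s])
    _ ≤ _ := by
        rw [sum_add_distrib, ← sum_div, ← div_div]
        gcongr
        exacts [(le_div_iff₀' hopen).mpr hXsum, (le_div_iff₀' hvalue).mpr hYsum]

/-- Parameterized tree-histogram bound for Weitzman's rule with full updates
(Algorithm 3): for every run of the algorithm, every partially-adaptive solution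
`(π, τ)` with total opening cost `OPT_o` and total value cost `OPT_v`, and all
`β, γ ∈ (0,1)`, the algorithm's total cost is at most
`OPT_o/(β·γ·(1−γ)) + OPT_v/((1−β)·γ)`. -/
theorem weitzman_full_updates_histogram_bound
    {B S : Type*} [Fintype B] [Fintype S] [Nonempty B] [Nonempty S]
    [DecidableEq B] [DecidableEq S]
    (c : B → ℝ) (hc : ∀ b, 0 ≤ c b)
    (v : B → S → ℝ) (hv : ∀ b s, 0 ≤ v b s)
    -- a run of Algorithm 3: the chosen box `bx R` and covered set `A R` at each state,
    -- and the depth `d s` at which each scenario `s` is covered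
    (bx : Finset S → B) (A : Finset S → Finset S) (d : S → ℕ)
    (hAsub : ∀ s : S, ∀ k ≤ d s, A (fullPath v bx A s k) ⊆ fullPath v bx A s k)
    (hAne : ∀ s : S, ∀ k ≤ d s, (A (fullPath v bx A s k)).Nonempty)
    -- `(bx R, A R)` minimizes the ratio over all boxes and nonempty subsets of `R`:
    (hmin : ∀ s : S, ∀ k ≤ d s, ∀ b' : B, ∀ A' : Finset S,
      A' ⊆ fullPath v bx A s k → A'.Nonempty →
      (fullCostAt c v bx A s k (bx (fullPath v bx A s k)) * (fullPath v bx A s k).card +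
          ∑ x ∈ A (fullPath v bx A s k), v (bx (fullPath v bx A s k)) x) /
        (A (fullPath v bx A s k)).card ≤
      (fullCostAt c v bx A s k b' * (fullPath v bx A s k).card + ∑ x ∈ A', v b' x) /
        A'.card)
    -- scenario `s` survives until depth `d s`, where it is covered:
    (hnotcov : ∀ s : S, ∀ k < d s, s ∉ A (fullPath v bx A s k))
    (hcov : ∀ s : S, s ∈ A (fullPath v bx A s (d s)))
    -- any partially-adaptive solution:
    (π : Fin (Fintype.card B) ≃ B) (τ : S → Fin (Fintype.card B))
    -- parameters of the analysis:
    (β γ : ℝ) (hβ0 : 0 < β) (hβ1 : β < 1) (hγ0 : 0 < γ) (hγ1 : γ < 1) :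
    ∑ s, ((∑ k ∈ Finset.range (d s + 1),
          fullCostAt c v bx A s k (bx (fullPath v bx A s k))) +
        v (bx (fullPath v bx A s (d s))) s) ≤
      (∑ s, optOpenCost c π τ s) / (β * γ * (1 - γ)) +
        (∑ s, optValue v π τ s) / ((1 - β) * γ) :=
  weitzman_full_updates_histogram_bound_general c hc v hv bx A d hAsub hAne hmin hnotcov hcov π τ β
    γ hβ0 hβ1 hγ0 hγ1
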